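/- Balance of spins in a contour: for any contour γ on ℤ^d with parameter L and for each # ∈ {0,1}, the number of sites of γ̄ with spin # satisfies r₁|γ̄| ≤ |γ̄_#| ≤ (1 - r₁)|γ̄|, where r₁ = 1/|B(0,2L) ∩ ℤ^d|. -/
import Mathlib


open Set

noncomputable section

/-- A site of the lattice `ℤ^d`. -/
abbrev Site (d : ℕ) := Fin d → ℤ

/-- Euclidean distance between lattice sites. -/
def eDist {d : ℕ} (i j : Site d) : ℝ :=
  Real.sqrt (∑ k, ((i k - j k : ℤ) : ℝ) ^ 2)

/-- Sup-norm adjacency: `‖i - j‖_∞ = 1`. -/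
def chebAdj {d : ℕ} (i j : Site d) : Prop :=
  i ≠ j ∧ ∀ k, |i k - j k| ≤ 1

/-- A site `i` is `s`-correct when all sites within Euclidean distance `L` carry spin `s`. -/
def correct {d : ℕ} (σ : Site d → Bool) (L : ℝ) (i : Site d) (s : Bool) : Prop :=
  ∀ j, eDist i j ≤ L → σ j = s

/-- A site is non-correct if it is neither `0`-correct nor `1`-correct. -/
def noncorrect {d : ℕ} (σ : Site d → Bool) (L : ℝ) (i : Site d) : Prop :=
  ¬ correct σ L i true ∧ ¬ correct σ L i false

/-- `γ̄` is (the support of) a contour: a nonempty finite maximal connected component of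
the set of non-correct sites (for `‖·‖_∞`-adjacency). -/
def IsContour {d : ℕ} (σ : Site d → Bool) (L : ℝ) (γ : Finset (Site d)) : Prop :=
  γ.Nonempty ∧ (∀ i ∈ γ, noncorrect σ L i) ∧
    (∀ i ∈ γ, ∀ j, noncorrect σ L j → chebAdj i j → j ∈ γ) ∧
    ∀ i ∈ γ, ∀ j ∈ γ,
      Relation.ReflTransGen (fun a b => a ∈ γ ∧ b ∈ γ ∧ chebAdj a b) i j

/-- Cardinality of the lattice ball `B(0, r) ∩ ℤ^d` (Euclidean radius `r`). -/
def latticeBallCard (d : ℕ) (r : ℝ) : ℕ :=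
  Nat.card {j : Site d | eDist j 0 ≤ r}

/-! ### Auxiliary lemmas -/

lemma eDist_self' {d : ℕ} (i : Site d) : eDist i i = 0 := by simp [eDist]

lemma eDist_le_of_abs_le {d : ℕ} {a b c e : Site d}
    (h : ∀ k, |a k - b k| ≤ |c k - e k|) : eDist a b ≤ eDist c e := by
  apply Real.sqrt_le_sqrt
  apply Finset.sum_le_sum
  intro k _
  have hk := h k
  have hk' : |((a k - b k : ℤ) : ℝ)| ≤ |((c k - e k : ℤ) : ℝ)| := by
    rw [← Int.cast_abs, ← Int.cast_abs]
    exact_mod_cast hk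
  calc ((a k - b k : ℤ) : ℝ) ^ 2 = |((a k - b k : ℤ) : ℝ)| ^ 2 := (sq_abs _).symm
    _ ≤ |((c k - e k : ℤ) : ℝ)| ^ 2 := pow_le_pow_left₀ (abs_nonneg _) hk' 2
    _ = ((c k - e k : ℤ) : ℝ) ^ 2 := sq_abs _

lemma abs_coord_le_eDist {d : ℕ} (j : Site d) (k : Fin d) :
    (|j k| : ℝ) ≤ eDist j 0 := by
  have h1 : ((j k : ℤ) : ℝ) ^ 2 ≤ ∑ k', ((j k' - 0 : ℤ) : ℝ) ^ 2 := by
    have := Finset.single_le_sum (f := fun k' => ((j k' - 0 : ℤ) : ℝ) ^ 2)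
      (fun k' _ => sq_nonneg _) (Finset.mem_univ k)
    simpa using this
  have h2 := Real.sqrt_le_sqrt h1
  rw [Real.sqrt_sq_eq_abs] at h2
  rw [eDist]
  simpa [Int.cast_abs] using h2

lemma ball_finite (d : ℕ) (r : ℝ) : {j : Site d | eDist j 0 ≤ r}.Finite := by
  apply Set.Finite.subset (Set.Finite.pi (fun k : Fin d => Set.finite_Icc (-⌈r⌉) ⌈r⌉))
  intro j hj
  simp only [Set.mem_pi, Set.mem_univ, Set.mem_Icc, forall_true_left]
  intro k
  have h := (abs_coord_le_eDist j k).trans hj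
  have h2 : (|j k| : ℝ) ≤ ((⌈r⌉ : ℤ) : ℝ) := h.trans (Int.le_ceil r)
  have h3 : |j k| ≤ ⌈r⌉ := by exact_mod_cast h2
  exact abs_le.mp h3

lemma ball_trans_eq {d : ℕ} (r : ℝ) (z : Site d) :
    {i : Site d | eDist i z ≤ r} = (fun w => w + z) '' {j : Site d | eDist j 0 ≤ r} := by
  ext i
  simp only [Set.mem_setOf_eq, Set.mem_image]
  constructor
  · intro h
    refine ⟨i - z, ?_, by abel⟩
    simpa [eDist, Pi.sub_apply, sub_zero] using h
  · rintro ⟨w, hw, rfl⟩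
    simpa [eDist, Pi.add_apply, add_sub_cancel_right] using hw

lemma ball_trans_finite {d : ℕ} (r : ℝ) (z : Site d) :
    {i : Site d | eDist i z ≤ r}.Finite := by
  rw [ball_trans_eq]; exact (ball_finite d r).image _

lemma ball_trans_card {d : ℕ} (r : ℝ) (z : Site d) :
    Nat.card {i : Site d | eDist i z ≤ r} = latticeBallCard d r := by
  rw [latticeBallCard, Nat.card_coe_set_eq, Nat.card_coe_set_eq, ball_trans_eq]
  exact Set.ncard_image_of_injective _ (add_left_injective z)

lemma abs_between_helper {p q r : ℤ} (h1 : min p q ≤ r) (h2 : r ≤ max p q) :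
    |r - p| ≤ |p - q| ∧ |r - q| ≤ |p - q| := by
  refine ⟨abs_le.mpr ⟨?_, ?_⟩, abs_le.mpr ⟨?_, ?_⟩⟩ <;>
    rcases le_total p q with h | h <;>
    [rw [abs_of_nonpos (by omega)]; rw [abs_of_nonneg (by omega)];
     rw [abs_of_nonpos (by omega)]; rw [abs_of_nonneg (by omega)];
     rw [abs_of_nonpos (by omega)]; rw [abs_of_nonneg (by omega)];
     rw [abs_of_nonpos (by omega)]; rw [abs_of_nonneg (by omega)]] <;>
    omega

/-- Along a monotone lattice path between two opposite-spin sites at distance ≤ L,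
every site is noncorrect; hence by the closure property the endpoint lies in γ. -/
lemma path_lemma {d : ℕ} {σ : Site d → Bool} {L : ℝ} {γ : Finset (Site d)}
    (hcl : ∀ i ∈ γ, ∀ j, noncorrect σ L j → chebAdj i j → j ∈ γ)
    {i j : Site d} (hij : eDist i j ≤ L) (hspin : σ j ≠ σ i) :
    ∀ n : ℕ, ∀ x : Site d, (∑ k, (x k - j k).natAbs) = n →
      (∀ k, min (i k) (j k) ≤ x k ∧ x k ≤ max (i k) (j k)) → x ∈ γ → j ∈ γ := by
  have hdij : ∀ a : Site d,
      (∀ k', min (i k') (j k') ≤ a k' ∧ a k' ≤ max (i k') (j k')) →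
      eDist a i ≤ L ∧ eDist a j ≤ L := by
    intro a ha
    constructor
    · refine (eDist_le_of_abs_le (c := i) (e := j) ?_).trans hij
      intro k'
      exact (abs_between_helper (ha k').1 (ha k').2).1
    · refine (eDist_le_of_abs_le (c := i) (e := j) ?_).trans hij
      intro k'
      exact (abs_between_helper (ha k').1 (ha k').2).2
  intro n
  induction n using Nat.strong_induction_on with
  | _ n IH =>
    intro x hsum hbet hxγ
    by_cases hxj : x = j
    · exact hxj ▸ hxγ
    · have hk0 : ∃ k0, x k0 ≠ j k0 := by
        by_contra h
        push_neg at h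
        exact hxj (funext h)
      obtain ⟨k0, hk0⟩ := hk0
      set δ : ℤ := if x k0 < j k0 then 1 else -1 with hδ
      have hδdef : (x k0 < j k0 ∧ δ = 1) ∨ (j k0 < x k0 ∧ δ = -1) := by
        by_cases hlt : x k0 < j k0
        · exact Or.inl ⟨hlt, if_pos hlt⟩
        · exact Or.inr ⟨by omega, if_neg hlt⟩
      set x' : Site d := Function.update x k0 (x k0 + δ) with hx'
      have hx'k : x' k0 = x k0 + δ := Function.update_self k0 _ x
      have hx'ne : ∀ k', k' ≠ k0 → x' k' = x k' := fun k' h =>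
        Function.update_of_ne h _ x
      have hbet' : ∀ k', min (i k') (j k') ≤ x' k' ∧ x' k' ≤ max (i k') (j k') := by
        intro k'
        by_cases h : k' = k0
        · subst h
          rw [hx'k]
          have hb := hbet k'
          rcases hδdef with ⟨h1, h2⟩ | ⟨h1, h2⟩ <;> omega
        · rw [hx'ne k' h]; exact hbet k'
      have hnc' : noncorrect σ L x' := by
        obtain ⟨h1, h2⟩ := hdij x' hbet'
        cases hσi : σ i with
        | true =>
          have hσj : σ j = false := by
            cases hσj : σ j
            · rfl
            · exact absurd (hσj.trans hσi.symm) hspin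
          exact ⟨fun hc => by simpa [hσj] using hc j h2,
                 fun hc => by simpa [hσi] using hc i h1⟩
        | false =>
          have hσj : σ j = true := by
            cases hσj : σ j
            · exact absurd (hσj.trans hσi.symm) hspin
            · rfl
          exact ⟨fun hc => by simpa [hσi] using hc i h1,
                 fun hc => by simpa [hσj] using hc j h2⟩
      have hadj : chebAdj x x' := by
        constructor
        · intro h
          have hxx : x k0 = x' k0 := by rw [h]
          rw [hx'k] at hxx
          rcases hδdef with ⟨h1, h2⟩ | ⟨h1, h2⟩ <;> omega
        · intro k'
          by_cases h : k' = k0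
          · subst h
            rw [hx'k]
            rcases hδdef with ⟨h1, h2⟩ | ⟨h1, h2⟩ <;> rw [h2] <;> simp
          · rw [hx'ne k' h]; simp
      have hx'γ : x' ∈ γ := hcl x hxγ x' hnc' hadj
      have hsum' : (∑ k', (x' k' - j k').natAbs) < n := by
        have e1 : ∀ k' ∈ Finset.univ.erase k0,
            (x' k' - j k').natAbs = (x k' - j k').natAbs := by
          intro k' hk'
          rw [hx'ne k' (Finset.mem_erase.mp hk').1]
        have h1 := Finset.add_sum_erase Finset.univ (fun k' => (x' k' - j k').natAbs)
          (Finset.mem_univ k0)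
        have h2 := Finset.add_sum_erase Finset.univ (fun k' => (x k' - j k').natAbs)
          (Finset.mem_univ k0)
        have h3 : (x' k0 - j k0).natAbs < (x k0 - j k0).natAbs := by
          rw [hx'k]
          rcases hδdef with ⟨ha, hb⟩ | ⟨ha, hb⟩ <;> omega
        calc (∑ k', (x' k' - j k').natAbs)
            = (x' k0 - j k0).natAbs + ∑ k' ∈ Finset.univ.erase k0, (x' k' - j k').natAbs :=
              h1.symm
          _ = (x' k0 - j k0).natAbs + ∑ k' ∈ Finset.univ.erase k0, (x k' - j k').natAbs := by
              rw [Finset.sum_congr rfl e1]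
          _ < (x k0 - j k0).natAbs + ∑ k' ∈ Finset.univ.erase k0, (x k' - j k').natAbs := by
              omega
          _ = n := by rw [h2, hsum]
      exact IH _ hsum' x' rfl hbet' hx'γ

/-- Each site of a contour has an opposite-spin contour site within distance `L`. -/
lemma opposite_in_contour {d : ℕ} {σ : Site d → Bool} {L : ℝ} {γ : Finset (Site d)}
    (hγ : IsContour σ L γ) {i : Site d} (hi : i ∈ γ) :
    ∃ j ∈ γ, σ j ≠ σ i ∧ eDist i j ≤ L := by
  obtain ⟨-, hnc, hcl, -⟩ := hγ
  have hnci := hnc i hi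
  have hex : ∃ j, eDist i j ≤ L ∧ σ j ≠ σ i := by
    cases hσi : σ i with
    | true =>
      have h := hnci.1
      rw [correct] at h
      push_neg at h
      obtain ⟨j, hj1, hj2⟩ := h
      exact ⟨j, hj1, by simp [hσi, hj2]⟩
    | false =>
      have h := hnci.2
      rw [correct] at h
      push_neg at h
      obtain ⟨j, hj1, hj2⟩ := h
      exact ⟨j, hj1, by simp [hσi, hj2]⟩
  obtain ⟨j, hj1, hj2⟩ := hex
  refine ⟨j, ?_, hj2, hj1⟩
  exact path_lemma hcl hj1 hj2 _ i rfl (fun k => ⟨min_le_left _ _, le_max_left _ _⟩) hi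

/-- The count of sites of one spin is at most `(N-1)` times the count of the other spin. -/
lemma spin_count {d : ℕ} {σ : Site d → Bool} {L : ℝ} (hL : 0 < L) {γ : Finset (Site d)}
    (hγ : IsContour σ L γ) (t : Bool) :
    (γ.filter fun i => σ i = !t).card ≤
      (latticeBallCard d (2 * L) - 1) * (γ.filter fun i => σ i = t).card := by
  classical
  set S := γ.filter fun i => σ i = !t with hS
  set T := γ.filter fun i => σ i = t with hT
  set f : Site d → Site d := fun i =>
    if h : ∃ j, j ∈ γ ∧ σ j ≠ σ i ∧ eDist i j ≤ L then h.choose else i with hf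
  have hfspec : ∀ i ∈ S, f i ∈ T ∧ eDist i (f i) ≤ L ∧ f i ≠ i := by
    intro i hiS
    rw [hS, Finset.mem_filter] at hiS
    obtain ⟨hiγ, hiσ⟩ := hiS
    have hex : ∃ j, j ∈ γ ∧ σ j ≠ σ i ∧ eDist i j ≤ L := by
      obtain ⟨j, h1, h2, h3⟩ := opposite_in_contour hγ hiγ
      exact ⟨j, h1, h2, h3⟩
    obtain ⟨hj1, hj2, hj3⟩ := hex.choose_spec
    have hfi : f i = hex.choose := dif_pos hex
    have hj2' : σ (f i) ≠ !t := by rw [hfi, ← hiσ]; exact hj2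
    have hfσ : σ (f i) = t := by
      cases t
      · simpa using hj2'
      · simpa using hj2'
    refine ⟨Finset.mem_filter.mpr ⟨hfi ▸ hj1, hfσ⟩, hfi ▸ hj3, ?_⟩
    intro h
    rw [h, hiσ] at hfσ
    cases t <;> simp at hfσ
  apply Finset.card_le_mul_card_image_of_maps_to (fun i hi => (hfspec i hi).1)
  intro a ha
  have hfib : S.filter (fun x => f x = a) ⊆
      ((ball_trans_finite (2 * L) a).toFinset.erase a) := by
    intro x hx
    rw [Finset.mem_filter] at hx
    obtain ⟨hxS, hxa⟩ := hx
    obtain ⟨-, hd, hne⟩ := hfspec x hxS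
    rw [hxa] at hd hne
    rw [Finset.mem_erase]
    refine ⟨fun h => hne (h ▸ rfl), ?_⟩
    rw [Set.Finite.mem_toFinset]
    exact le_trans hd (by linarith)
  have hball : (ball_trans_finite (2 * L) a).toFinset.card = latticeBallCard d (2 * L) := by
    rw [← ball_trans_card (2 * L) a, Nat.card_coe_set_eq,
      Set.ncard_eq_toFinset_card _ (ball_trans_finite (2 * L) a)]
  have haball : a ∈ (ball_trans_finite (2 * L) a).toFinset := by
    rw [Set.Finite.mem_toFinset]
    show eDist a a ≤ 2 * L
    rw [eDist_self']
    linarith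
  calc (S.filter fun x => f x = a).card
      ≤ ((ball_trans_finite (2 * L) a).toFinset.erase a).card := Finset.card_le_card hfib
    _ = latticeBallCard d (2 * L) - 1 := by rw [Finset.card_erase_of_mem haball, hball]

/-- Balance of spins in a contour: for any contour `γ` with parameter `L` and each spin
`s ∈ {0,1}`, the number of sites of `γ̄` carrying spin `s` satisfies
`r₁ |γ̄| ≤ |γ̄_s| ≤ (1 - r₁) |γ̄|` with `r₁ = 1/|B(0,2L) ∩ ℤ^d|`. -/
theorem contour_spin_balance
    (d : ℕ) (L : ℝ) (hL : 0 < L) (σ : Site d → Bool) (γ : Finset (Site d))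
    (hγ : IsContour σ L γ) (s : Bool) :
    (1 / (latticeBallCard d (2 * L) : ℝ)) * γ.card ≤
        (Nat.card {i : Site d | i ∈ γ ∧ σ i = s} : ℝ) ∧
      (Nat.card {i : Site d | i ∈ γ ∧ σ i = s} : ℝ) ≤
        (1 - 1 / (latticeBallCard d (2 * L) : ℝ)) * γ.card := by
  classical
  set N := latticeBallCard d (2 * L) with hNdef
  have hN1 : 1 ≤ N := by
    rw [hNdef, latticeBallCard, Nat.card_coe_set_eq,
      Set.ncard_eq_toFinset_card _ (ball_finite d (2 * L))]
    apply Finset.card_pos.mpr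
    refine ⟨0, ?_⟩
    rw [Set.Finite.mem_toFinset]
    show eDist 0 0 ≤ 2 * L
    rw [eDist_self']
    linarith
  set a := (γ.filter fun i => σ i = s).card with hadef
  set b := (γ.filter fun i => σ i = !s).card with hbdef
  have hcard : Nat.card {i : Site d | i ∈ γ ∧ σ i = s} = a := by
    have hset : {i : Site d | i ∈ γ ∧ σ i = s} = ↑(γ.filter fun i => σ i = s) := by
      ext i; simp
    rw [hset, Nat.card_coe_set_eq, Set.ncard_coe_finset]
  have hpart : a + b = γ.card := by
    have h := Finset.card_filter_add_card_filter_not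
      (s := γ) (p := fun i => σ i = s)
    rw [← h, hadef, hbdef]
    congr 1
    apply Finset.card_bij (fun x _ => x) ?_ (fun x y _ _ h => h) ?_
    · intro x hx
      rw [Finset.mem_filter] at hx ⊢
      refine ⟨hx.1, ?_⟩
      have := hx.2
      cases hσx : σ x <;> cases s <;> simp_all
    · intro x hx
      rw [Finset.mem_filter] at hx
      refine ⟨x, ?_, rfl⟩
      rw [Finset.mem_filter]
      refine ⟨hx.1, ?_⟩
      have := hx.2
      cases hσx : σ x <;> cases s <;> simp_all
  have hba : b ≤ (N - 1) * a := spin_count hL hγ s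
  have hab : a ≤ (N - 1) * b := by
    have h := spin_count hL hγ (!s)
    have e1 : (γ.filter fun i => σ i = !(!s)) = γ.filter fun i => σ i = s := by
      simp [Bool.not_not]
    rw [e1] at h
    exact h
  -- pass to the reals
  have hNpos : (0 : ℝ) < (N : ℝ) := by exact_mod_cast Nat.lt_of_lt_of_le Nat.zero_lt_one hN1
  have hNcast : ((N - 1 : ℕ) : ℝ) = (N : ℝ) - 1 := by
    rw [Nat.cast_sub hN1, Nat.cast_one]
  have hba' : (b : ℝ) ≤ ((N : ℝ) - 1) * a := by
    rw [← hNcast]; exact_mod_cast hba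
  have hab' : (a : ℝ) ≤ ((N : ℝ) - 1) * b := by
    rw [← hNcast]; exact_mod_cast hab
  have hpart' : (a : ℝ) + b = γ.card := by exact_mod_cast hpart
  rw [hcard]
  constructor
  · rw [div_mul_eq_mul_div, div_le_iff₀ hNpos]
    nlinarith [hba', hpart']
  · have h2 : (1 - 1 / (N : ℝ)) * (γ.card : ℝ) = ((N : ℝ) - 1) * (γ.card : ℝ) / N := by
      field_simp
    rw [h2, le_div_iff₀ hNpos]
    nlinarith [hab', hpart']

end
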